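/- arXiv:0910.0885 — 5 statements merged into one kernel-verified Lean document; each statement's English description precedes it below -/
import Mathlib

section
/- A topological manifold is metrisable if and only if it is σ-compact. -/
/-- A topological manifold of dimension `n`: a connected Hausdorff space in which
every point has an open neighbourhood homeomorphic to `ℝ^n`. -/
def IsTopManifold (M : Type*) [TopologicalSpace M] (n : ℕ) : Prop :=
  ConnectedSpace M ∧ T2Space M ∧
    ∀ x : M, ∃ U : Set M, IsOpen U ∧ x ∈ U ∧ Nonempty (U ≃ₜ (Fin n → ℝ))

/-!
Charts make a manifold locally compact and locally second countable. If it is σ-compact,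
countably many charts cover it, so it is second countable and hence metrizable by Urysohn.
Conversely, in a locally compact metric space the radius `ρ x` up to which closed balls about `x`
are compact is positive and 1-Lipschitz. Enlarging a compact set by balls of radius comparable to
`ρ` gives compact sets `K₀ ⊆ K₁ ⊆ ⋯`, each in the interior of the next, whose union is open and,
as `ρ` varies slowly, also closed; by connectedness it is the whole space.
-/

open Set Metric TopologicalSpace

theorem IsOpen.exists_openPartialHomeomorph_source_eq {M H : Type*} [TopologicalSpace M]
    [TopologicalSpace H] {U : Set M} (hU : IsOpen U) [Nonempty U] (e : U ≃ₜ H) :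
    ∃ f : OpenPartialHomeomorph M H, f.source = U :=
  ⟨((⟨U, hU⟩ : Opens M).openPartialHomeomorphSubtypeCoe inferInstance).symm.transHomeomorph e,
    by simp⟩

theorem exists_openPartialHomeomorph_mem_source {M H : Type*}
    [TopologicalSpace M] [TopologicalSpace H]
    (h : ∀ x : M, ∃ U : Set M, IsOpen U ∧ x ∈ U ∧ Nonempty (U ≃ₜ H)) (x : M) :
    ∃ f : OpenPartialHomeomorph M H, x ∈ f.source := by
  obtain ⟨U, hU, hxU, ⟨e⟩⟩ := h x
  have : Nonempty U := ⟨⟨x, hxU⟩⟩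
  obtain ⟨f, hf⟩ := hU.exists_openPartialHomeomorph_source_eq e
  exact ⟨f, hf ▸ hxU⟩

@[reducible]
noncomputable def ChartedSpace.ofLocallyHomeomorphic {M H : Type*} [TopologicalSpace M]
    [TopologicalSpace H] (h : ∀ x : M, ∃ U : Set M, IsOpen U ∧ x ∈ U ∧ Nonempty (U ≃ₜ H)) :
    ChartedSpace H M where
  atlas := range fun x => (exists_openPartialHomeomorph_mem_source h x).choose
  chartAt x := (exists_openPartialHomeomorph_mem_source h x).choose
  mem_chart_source x := (exists_openPartialHomeomorph_mem_source h x).choose_spec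
  chart_mem_atlas x := mem_range_self x

section CompactRadius

variable {X : Type*} [PseudoMetricSpace X]

/-- The cap `r ≤ 1` keeps the set bounded, so that its `sSup` is not the junk value `0`. -/
noncomputable def compactRadius (x : X) : ℝ :=
  sSup {r | r ≤ 1 ∧ IsCompact (closedBall x r)}

theorem bddAbove_compactRadius_set (x : X) :
    BddAbove {r | r ≤ 1 ∧ IsCompact (closedBall x r)} :=
  ⟨1, fun _ hr => hr.1⟩

variable [WeaklyLocallyCompactSpace X]

theorem exists_pos_le_one_isCompact_closedBall (x : X) :
    ∃ r > 0, r ≤ 1 ∧ IsCompact (closedBall x r) := by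
  obtain ⟨K, hK, hKx⟩ := exists_compact_mem_nhds x
  obtain ⟨ε, hε, hεK⟩ := nhds_basis_closedBall.mem_iff.1 hKx
  refine ⟨min ε 1, lt_min hε one_pos, min_le_right _ _, ?_⟩
  exact hK.of_isClosed_subset isClosed_closedBall
    ((closedBall_subset_closedBall (min_le_left _ _)).trans hεK)

theorem compactRadius_pos (x : X) : 0 < compactRadius x := by
  obtain ⟨r, hr, hrS⟩ := exists_pos_le_one_isCompact_closedBall x
  exact hr.trans_le (le_csSup (bddAbove_compactRadius_set x) hrS)

theorem isCompact_closedBall_of_lt_compactRadius {x : X} {r : ℝ} (hr : r < compactRadius x) :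
    IsCompact (closedBall x r) := by
  obtain ⟨s, hs, hrs⟩ := exists_lt_of_lt_csSup
    ((exists_pos_le_one_isCompact_closedBall x).imp fun _ h => h.2) hr
  exact hs.2.of_isClosed_subset isClosed_closedBall (closedBall_subset_closedBall hrs.le)

theorem compactRadius_le_add_dist (x y : X) : compactRadius x ≤ compactRadius y + dist x y := by
  refine csSup_le ((exists_pos_le_one_isCompact_closedBall x).imp fun _ h => h.2) fun r hr => ?_
  rcases le_or_gt r (dist x y) with hrxy | hrxy
  · linarith [compactRadius_pos y]
  · suffices r - dist x y ≤ compactRadius y by linarith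
    refine le_csSup (bddAbove_compactRadius_set y)
      ⟨by linarith [hr.1, dist_nonneg (x := x) (y := y)], ?_⟩
    refine hr.2.of_isClosed_subset isClosed_closedBall fun z hz => ?_
    rw [mem_closedBall] at hz ⊢
    linarith [dist_triangle z y x, dist_comm x y]

theorem exists_isCompact_subset_interior_of_dist_lt_compactRadius {A : Set X}
    (hA : IsCompact A) : ∃ B, IsCompact B ∧ A ⊆ interior B ∧
      ∀ z ∈ A, ∀ y, dist y z < compactRadius y / 8 → y ∈ B := by
  obtain ⟨F, -, hAF⟩ := hA.elim_nhds_subcover (fun x => ball x (compactRadius x / 8))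
    fun x _ => ball_mem_nhds x (by linarith [compactRadius_pos x])
  refine ⟨⋃ x ∈ F, closedBall x (compactRadius x / 2), ?_, ?_, ?_⟩
  · exact F.isCompact_biUnion fun x _ =>
      isCompact_closedBall_of_lt_compactRadius (by linarith [compactRadius_pos x])
  · intro a ha
    obtain ⟨x, hxF, hax⟩ := mem_iUnion₂.1 (hAF ha)
    refine mem_interior.2 ⟨ball x (compactRadius x / 8), ?_, isOpen_ball, hax⟩
    refine subset_biUnion_of_mem (u := fun x => closedBall x (compactRadius x / 2)) hxF |>.trans' ?_
    exact ball_subset_closedBall.trans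
      (closedBall_subset_closedBall (by linarith [compactRadius_pos x]))
  · intro z hz y hyz
    obtain ⟨x, hxF, hzx⟩ := mem_iUnion₂.1 (hAF hz)
    rw [mem_ball] at hzx
    have hyx : dist y x < compactRadius y / 8 + compactRadius x / 8 := by
      linarith [dist_triangle y z x]
    have hρ : compactRadius y ≤ compactRadius x + dist y x := compactRadius_le_add_dist y x
    -- `hyx` and `hρ` give `ρ y ≤ 9/7 ρ x`, hence `dist y x < 2/7 ρ x`
    refine mem_biUnion hxF (mem_closedBall.2 ?_)
    linarith [compactRadius_pos x]

end CompactRadius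

theorem Metric.sigmaCompactSpace_of_connectedSpace {X : Type*} [PseudoMetricSpace X]
    [WeaklyLocallyCompactSpace X] [ConnectedSpace X] : SigmaCompactSpace X := by
  obtain ⟨x₀⟩ : Nonempty X := inferInstance
  choose! B hB_compact hB_interior hB_near using
    fun (A : Set X) (hA : IsCompact A) =>
      exists_isCompact_subset_interior_of_dist_lt_compactRadius hA
  let K : ℕ → Set X := fun n => B^[n] {x₀}
  have hK_succ : ∀ n, K (n + 1) = B (K n) := fun n => Function.iterate_succ_apply' B n {x₀}
  have hK_compact : ∀ n, IsCompact (K n) := by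
    intro n
    induction n with
    | zero => exact isCompact_singleton
    | succ n ih => exact hK_succ n ▸ hB_compact _ ih
  have hopen : IsOpen (⋃ n, K n) := by
    refine isOpen_iff_mem_nhds.2 fun y hy => ?_
    obtain ⟨n, hyn⟩ := mem_iUnion.1 hy
    refine Filter.mem_of_superset ?_ (subset_iUnion K (n + 1))
    rw [hK_succ]
    exact mem_interior_iff_mem_nhds.1 (hB_interior _ (hK_compact n) hyn)
  have hclosed : IsClosed (⋃ n, K n) := by
    refine closure_subset_iff_isClosed.1 fun y hy => ?_
    obtain ⟨z, hz, hyz⟩ :=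
      Metric.mem_closure_iff.1 hy (compactRadius y / 8) (by linarith [compactRadius_pos y])
    obtain ⟨n, hzn⟩ := mem_iUnion.1 hz
    exact mem_iUnion.2 ⟨n + 1, hK_succ n ▸ hB_near _ (hK_compact n) z hzn y hyz⟩
  exact ⟨⟨K, hK_compact, IsClopen.eq_univ ⟨hclosed, hopen⟩ ⟨x₀, mem_iUnion.2 ⟨0, rfl⟩⟩⟩⟩

theorem manifold_metrizable_iff_sigmaCompact (M : Type*) [TopologicalSpace M] (n : ℕ)
    (hM : IsTopManifold M n) :
    TopologicalSpace.MetrizableSpace M ↔ SigmaCompactSpace M := by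
  obtain ⟨hconn, hT2, hcharts⟩ := hM
  let := ChartedSpace.ofLocallyHomeomorphic hcharts
  constructor
  · intro hmet
    let := metrizableSpaceMetric M
    have := ChartedSpace.locallyCompactSpace (Fin n → ℝ) M
    exact Metric.sigmaCompactSpace_of_connectedSpace
  · intro hsc
    exact Manifold.metrizableSpace (modelWithCornersSelf ℝ (Fin n → ℝ)) M
end

section
/- In a connected, locally separable, locally connected topological space, metaLindelöfness implies Lindelöfness. In particular, every metaLindelöf manifold is Lindelöf. -/
/-! Cover `X` by separable open sets and take a point-countable open refinement `𝒱`. A separable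
set meets only countably many members of a point-countable open family, so each member of `𝒱`
meets only countably many others. Chaining from one member therefore reaches only countably many
members, and their union is clopen, hence everything by connectedness: `X` is a countable union of
separable sets, so it is separable. In a separable space a point-countable open refinement of any
open cover has only countably many nonempty members, which gives a countable subcover. -/

/-- `X` is metaLindelöf: every open cover has a point-countable open refinement. -/
def MetaLindelof (X : Type*) [TopologicalSpace X] : Prop :=
  ∀ 𝒰 : Set (Set X), (∀ U ∈ 𝒰, IsOpen U) → ⋃₀ 𝒰 = Set.univ →
    ∃ 𝒱 : Set (Set X), (∀ V ∈ 𝒱, IsOpen V) ∧ ⋃₀ 𝒱 = Set.univ ∧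
      (∀ V ∈ 𝒱, ∃ U ∈ 𝒰, V ⊆ U) ∧
      ∀ x : X, {V ∈ 𝒱 | x ∈ V}.Countable

open Set TopologicalSpace

theorem Relation.countable_setOf_reflTransGen {α : Type*} {r : α → α → Prop}
    (hr : ∀ a, {b | r a b}.Countable) (a : α) : {b | Relation.ReflTransGen r a b}.Countable := by
  let level : ℕ → Set α := fun n => Nat.rec {a} (fun _ s => ⋃ b ∈ s, {c | r b c}) n
  have level_countable : ∀ n, (level n).Countable := by
    intro n
    induction n with
    | zero => exact countable_singleton a
    | succ n ih => exact ih.biUnion fun b _ => hr b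
  have mem_level : ∀ b, Relation.ReflTransGen r a b → ∃ n, b ∈ level n := by
    intro b hab
    induction hab with
    | refl => exact ⟨0, rfl⟩
    | tail _ hbc ih =>
      obtain ⟨n, hn⟩ := ih
      exact ⟨n + 1, mem_biUnion hn hbc⟩
  refine (countable_iUnion level_countable).mono fun b hab => ?_
  simpa only [mem_iUnion] using mem_level b hab

section

variable {X : Type*} [TopologicalSpace X]

theorem countable_setOf_inter_nonempty_of_isSeparable {𝒱 : Set (Set X)}
    (hopen : ∀ V ∈ 𝒱, IsOpen V) (hpc : ∀ x : X, {V ∈ 𝒱 | x ∈ V}.Countable) {s : Set X}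
    (hs : IsSeparable s) : {V ∈ 𝒱 | (V ∩ s).Nonempty}.Countable := by
  obtain ⟨c, hc, hsc⟩ := hs
  refine (hc.biUnion fun x _ => hpc x).mono ?_
  rintro V ⟨hV, y, hyV, hys⟩
  obtain ⟨x, hxV, hxc⟩ := mem_closure_iff.1 (hsc hys) V (hopen V hV) hyV
  exact mem_biUnion hxc ⟨hV, hxV⟩

theorem countable_setOf_nonempty_of_countable_meets [PreconnectedSpace X] {𝒱 : Set (Set X)}
    (hopen : ∀ V ∈ 𝒱, IsOpen V) (hcover : ⋃₀ 𝒱 = univ)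
    (hmeets : ∀ V ∈ 𝒱, {W ∈ 𝒱 | (W ∩ V).Nonempty}.Countable) :
    {V ∈ 𝒱 | V.Nonempty}.Countable := by
  rcases eq_empty_or_nonempty {V ∈ 𝒱 | V.Nonempty} with h | ⟨V₀, hV₀, x₀, hx₀⟩
  · exact h ▸ countable_empty
  let r : Set X → Set X → Prop := fun V W => V ∈ 𝒱 ∧ W ∈ 𝒱 ∧ (W ∩ V).Nonempty
  let chain : Set (Set X) := {W | Relation.ReflTransGen r V₀ W}
  have chain_countable : chain.Countable := by
    refine Relation.countable_setOf_reflTransGen (fun V => ?_) V₀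
    by_cases hV : V ∈ 𝒱
    · exact (hmeets V hV).mono fun W hW => hW.2
    · exact countable_empty.mono fun W hW => hV hW.1
  have chain_subset : chain ⊆ 𝒱 := fun W hW => by
    rcases Relation.ReflTransGen.cases_tail hW with rfl | ⟨_, _, _, hW, _⟩
    exacts [hV₀, hW]
  have mem_chain : ∀ V ∈ 𝒱, (V ∩ ⋃₀ chain).Nonempty → V ∈ chain := by
    rintro V hV ⟨x, hxV, W, hW, hxW⟩
    exact hW.tail ⟨chain_subset hW, hV, x, hxV, hxW⟩
  have chain_clopen : IsClopen (⋃₀ chain) := by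
    refine ⟨⟨isOpen_iff_forall_mem_open.2 fun x hx => ?_⟩,
      isOpen_sUnion fun W hW => hopen W (chain_subset hW)⟩
    obtain ⟨V, hV, hxV⟩ := sUnion_eq_univ_iff.1 hcover x
    refine ⟨V, fun y hyV hy => hx ⟨V, mem_chain V hV ⟨y, hyV, hy⟩, hxV⟩, hopen V hV, hxV⟩
  have chain_univ : ⋃₀ chain = univ :=
    chain_clopen.eq_univ ⟨x₀, V₀, .refl, hx₀⟩
  refine chain_countable.mono fun V ⟨hV, x, hx⟩ => mem_chain V hV ⟨x, hx, ?_⟩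
  exact chain_univ ▸ mem_univ x

theorem MetaLindelof.separableSpace [PreconnectedSpace X]
    (hsep : ∀ x : X, ∃ U : Set X, IsOpen U ∧ x ∈ U ∧ IsSeparable U) (h : MetaLindelof X) :
    SeparableSpace X := by
  obtain ⟨𝒱, hopen, hcover, hrefines, hpc⟩ := h {U | IsOpen U ∧ IsSeparable U} (fun _ hU => hU.1)
    (eq_univ_of_forall fun x => by
      obtain ⟨U, hU, hxU, hUsep⟩ := hsep x
      exact ⟨U, ⟨hU, hUsep⟩, hxU⟩)
  have separable_of_mem : ∀ V ∈ 𝒱, IsSeparable V := fun V hV => by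
    obtain ⟨U, ⟨-, hU⟩, hVU⟩ := hrefines V hV
    exact hU.mono hVU
  have hcount := countable_setOf_nonempty_of_countable_meets hopen hcover fun V hV =>
    countable_setOf_inter_nonempty_of_isSeparable hopen hpc (separable_of_mem V hV)
  have : Countable {V ∈ 𝒱 | V.Nonempty} := hcount.to_subtype
  have hunion : ⋃₀ {V ∈ 𝒱 | V.Nonempty} = univ := by
    refine eq_univ_of_forall fun x => ?_
    obtain ⟨V, hV, hxV⟩ := sUnion_eq_univ_iff.1 hcover x
    exact ⟨V, ⟨hV, x, hxV⟩, hxV⟩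
  rw [← isSeparable_univ_iff, ← hunion, sUnion_eq_iUnion]
  exact IsSeparable.iUnion fun V => separable_of_mem V V.2.1

theorem MetaLindelof.lindelofSpace [SeparableSpace X] (h : MetaLindelof X) : LindelofSpace X := by
  refine ⟨isLindelof_of_countable_subcover fun {ι} A hA hcoverA => ?_⟩
  obtain ⟨𝒱, hopen, hcover, hrefines, hpc⟩ := h (range A) (forall_mem_range.2 hA)
    (by rw [sUnion_range]; exact univ_subset_iff.1 hcoverA)
  have hcount : {V ∈ 𝒱 | V.Nonempty}.Countable := by
    simpa only [inter_univ] using countable_setOf_inter_nonempty_of_isSeparable hopen hpc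
      (IsSeparable.of_separableSpace univ)
  have exists_index : ∀ V ∈ 𝒱, ∃ i, V ⊆ A i := fun V hV => by
    obtain ⟨_, ⟨i, rfl⟩, hVA⟩ := hrefines V hV
    exact ⟨i, hVA⟩
  choose index hindex using exists_index
  have : Countable {V ∈ 𝒱 | V.Nonempty} := hcount.to_subtype
  refine ⟨range fun V : {V ∈ 𝒱 | V.Nonempty} => index V V.2.1, countable_range _, fun x _ => ?_⟩
  obtain ⟨V, hV, hxV⟩ := sUnion_eq_univ_iff.1 hcover x
  exact mem_biUnion (mem_range_self ⟨V, hV, x, hxV⟩) (hindex V hV hxV)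

end

theorem metaLindelof_implies_lindelof_general (X : Type*) [TopologicalSpace X]
    [ConnectedSpace X]
    (hsep : ∀ x : X, ∃ U : Set X, IsOpen U ∧ x ∈ U ∧ TopologicalSpace.SeparableSpace U)
    (hmL : MetaLindelof X) : LindelofSpace X := by
  have : SeparableSpace X := hmL.separableSpace fun x => by
    obtain ⟨U, hU, hxU, _⟩ := hsep x
    exact ⟨U, hU, hxU, IsSeparable.of_subtype U⟩
  exact hmL.lindelofSpace

theorem metaLindelof_implies_lindelof (X : Type*) [TopologicalSpace X]
    [ConnectedSpace X] [LocallyConnectedSpace X]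
    (hsep : ∀ x : X, ∃ U : Set X, IsOpen U ∧ x ∈ U ∧ TopologicalSpace.SeparableSpace U)
    (hmL : MetaLindelof X) : LindelofSpace X :=
  metaLindelof_implies_lindelof_general X hsep hmL
end

section
/- Every T1 paracompact space has property pp. -/
/-- `X` has property pp: every open cover has an open refinement `𝒱` such that the image of
every choice function on `𝒱` is closed and discrete in `X`. -/
def PropertyPP (X : Type*) [TopologicalSpace X] : Prop :=
  ∀ 𝒰 : Set (Set X), (∀ U ∈ 𝒰, IsOpen U) → ⋃₀ 𝒰 = Set.univ →
    ∃ 𝒱 : Set (Set X), (∀ V ∈ 𝒱, IsOpen V) ∧ ⋃₀ 𝒱 = Set.univ ∧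
      (∀ V ∈ 𝒱, ∃ U ∈ 𝒰, V ⊆ U) ∧
      ∀ f : Set X → X, (∀ V ∈ 𝒱, f V ∈ V) →
        IsClosed (f '' 𝒱) ∧ DiscreteTopology (f '' 𝒱)

open Set Filter Topology

section

variable {X : Type*} [TopologicalSpace X]

theorem isClosed_and_isDiscrete_iff_finite_inter_nhds [T1Space X] {S : Set X} :
    IsClosed S ∧ IsDiscrete S ↔ ∀ x, ∃ t ∈ 𝓝 x, (t ∩ S).Finite := by
  rw [← compl_mem_codiscrete_iff, codiscrete, codiscreteWithin_iff_locallyFiniteComplementWithin]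
  simp

theorem LocallyFinite.finite_inter_range_of_mem {ι : Type*} {v : ι → Set X}
    (hv : LocallyFinite v) {g : ι → X} (hg : ∀ i, g i ∈ v i) (x : X) :
    ∃ t ∈ 𝓝 x, (t ∩ range g).Finite := by
  obtain ⟨t, ht, hfin⟩ := hv x
  refine ⟨t, ht, (hfin.image g).subset ?_⟩
  rintro _ ⟨hgt, i, rfl⟩
  exact ⟨i, ⟨g i, hg i, hgt⟩, rfl⟩

theorem LocallyFinite.isClosed_and_isDiscrete_range_of_mem [T1Space X] {ι : Type*}
    {v : ι → Set X} (hv : LocallyFinite v) {g : ι → X} (hg : ∀ i, g i ∈ v i) :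
    IsClosed (range g) ∧ IsDiscrete (range g) :=
  isClosed_and_isDiscrete_iff_finite_inter_nhds.2 (hv.finite_inter_range_of_mem hg)

end

theorem paracompact_t1_propertyPP (X : Type*) [TopologicalSpace X]
    [T1Space X] [ParacompactSpace X] : PropertyPP X := by
  intro 𝒰 h𝒰_open h𝒰_cover
  obtain ⟨β, v, hv_open, hv_cover, hv_lf, hv_ref⟩ :=
    ParacompactSpace.locallyFinite_refinement 𝒰 Subtype.val (fun U => h𝒰_open U U.2)
      (by rwa [← sUnion_eq_iUnion])
  refine ⟨range v, forall_mem_range.2 hv_open, by rwa [sUnion_range], ?_, ?_⟩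
  · rintro _ ⟨b, rfl⟩
    obtain ⟨U, hU⟩ := hv_ref b
    exact ⟨U, U.2, hU⟩
  · intro f hf
    rw [← range_comp, ← isDiscrete_iff_discreteTopology]
    exact hv_lf.isClosed_and_isDiscrete_range_of_mem fun b => hf _ (mem_range_self b)
end

section
/- The open long ray L⁺, defined as the set ω₁ × [0,1) minus the point (0,0) with the order topology from the lexicographic order, is a connected, locally Euclidean (dimension 1), Hausdorff space that is not metrisable. -/
/-!
Since every bounded subset of `L⁺` has a supremum and the order is dense, `L⁺` is connected.
Below the point `(α + 1, 0)` lie only countably many levels, so points with rational second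
coordinate are order-dense there; a separable, Dedekind-complete dense order without endpoints is
order-isomorphic to `ℝ`. Finally, a countable supremum of countable ordinals is countable, so
every countable subset of `L⁺` is bounded: every sequence in `[x, ∞)` then lies in a compact
interval, making `[x, ∞)` sequentially compact. In a metrizable space it would be compact, hence
bounded, which it is not.
-/

/-- The set of countable ordinals, i.e. ordinals less than `ω₁`. -/
def Omega1 : Type _ := {o : Ordinal // o < (Cardinal.aleph 1).ord}

noncomputable instance : LinearOrder Omega1 := Subtype.instLinearOrder _

/-- The point `(0, 0)` of `ω₁ ×ₗ [0,1)`. -/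
def longRayZero : Omega1 ×ₗ (Set.Ico (0:ℝ) 1) :=
  toLex (⟨0, by
    rw [Cardinal.lt_ord]
    simpa using (Cardinal.aleph_pos 1)⟩,
    ⟨0, by constructor <;> norm_num⟩)

/-- The open long ray: `ω₁ × [0,1)` with the lexicographic order, minus `(0,0)`. -/
def LongRay : Type _ := {p : Omega1 ×ₗ (Set.Ico (0:ℝ) 1) // p ≠ longRayZero}

noncomputable instance : LinearOrder LongRay := Subtype.instLinearOrder _

noncomputable instance : TopologicalSpace LongRay := Preorder.topology LongRay

instance : OrderTopology LongRay := ⟨rfl⟩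

open Ordinal Set

open Classical in
noncomputable abbrev ConditionallyCompleteLinearOrder.ofExistsIsLUB (α : Type*) [LinearOrder α]
    [Nonempty α] (h : ∀ s : Set α, s.Nonempty → BddAbove s → ∃ x, IsLUB s x) :
    ConditionallyCompleteLinearOrder α where
  __ := ‹LinearOrder α›
  __ := LinearOrder.toLattice
  sSup s := if hs : s.Nonempty ∧ BddAbove s then (h s hs.1 hs.2).choose else Classical.arbitrary α
  sInf s := if hs : s.Nonempty ∧ BddBelow s then
    (h (lowerBounds s) hs.2 hs.1.bddAbove_lowerBounds).choose else Classical.arbitrary α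
  isLUB_csSup s hne hbdd := by
    rw [dif_pos ⟨hne, hbdd⟩]
    exact (h s hne hbdd).choose_spec
  isGLB_csInf s hne hbdd := by
    rw [dif_pos ⟨hne, hbdd⟩]
    exact isLUB_lowerBounds.mp (h _ hbdd hne.bddAbove_lowerBounds).choose_spec
  csSup_of_not_bddAbove s hs := by simp [hs]
  csInf_of_not_bddBelow s hs := by simp [hs]

theorem exists_orderEmbedding_rat_of_countable_dense {A : Type*} [LinearOrder A] [NoMinOrder A]
    [NoMaxOrder A] [Nonempty A] {D : Set A} (hD : D.Countable)
    (hdense : ∀ x y : A, x < y → ∃ d ∈ D, x < d ∧ d < y) :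
    ∃ e : ℚ ↪o A, ∀ x y : A, x < y → ∃ q, x < e q ∧ e q < y := by
  have : Countable D := hD.to_subtype
  have : DenselyOrdered D := ⟨fun d₁ d₂ h ↦ by
    obtain ⟨d, hd, h₁, h₂⟩ := hdense d₁ d₂ h
    exact ⟨⟨d, hd⟩, h₁, h₂⟩⟩
  have : NoMaxOrder D := ⟨fun d ↦ by
    obtain ⟨d', hd', h, -⟩ := hdense d _ (exists_gt (d : A)).choose_spec
    exact ⟨⟨d', hd'⟩, h⟩⟩
  have : NoMinOrder D := ⟨fun d ↦ by
    obtain ⟨d', hd', -, h⟩ := hdense _ d (exists_lt (d : A)).choose_spec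
    exact ⟨⟨d', hd'⟩, h⟩⟩
  have : Nonempty D := by
    obtain ⟨x⟩ := ‹Nonempty A›
    obtain ⟨d, hd, -⟩ := hdense x _ (exists_gt x).choose_spec
    exact ⟨⟨d, hd⟩⟩
  obtain ⟨f⟩ := Order.iso_of_countable_dense ℚ D
  refine ⟨f.toOrderEmbedding.trans (OrderEmbedding.subtype _), fun x y hxy ↦ ?_⟩
  obtain ⟨d, hd, h⟩ := hdense x y hxy
  exact ⟨f.symm ⟨d, hd⟩, by simpa using h⟩

theorem nonempty_orderIso_real_of_dense_rat_embedding {A : Type*}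
    [ConditionallyCompleteLinearOrder A] [NoMinOrder A] [NoMaxOrder A] (e : ℚ ↪o A)
    (he : ∀ x y : A, x < y → ∃ q, x < e q ∧ e q < y) : Nonempty (A ≃o ℝ) := by
  let below (x : A) : Set ℝ := (↑) '' {q : ℚ | e q < x}
  have below_nonempty (x : A) : (below x).Nonempty := by
    obtain ⟨q, -, hq⟩ := he _ x (exists_lt x).choose_spec
    exact ⟨q, q, hq, rfl⟩
  have sSup_below_le (x : A) (q : ℚ) (hq : x ≤ e q) : sSup (below x) ≤ q :=
    csSup_le (below_nonempty x) <| by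
      rintro - ⟨q', hq', rfl⟩
      exact_mod_cast (e.lt_iff_lt.mp (hq'.trans_le hq)).le
  have below_bddAbove (x : A) : BddAbove (below x) := by
    obtain ⟨q, hq, -⟩ := he x _ (exists_gt x).choose_spec
    refine ⟨q, ?_⟩
    rintro - ⟨q', hq', rfl⟩
    exact_mod_cast (e.lt_iff_lt.mp (hq'.trans hq)).le
  have le_sSup_below (x : A) (q : ℚ) (hq : e q < x) : (q : ℝ) ≤ sSup (below x) :=
    le_csSup (below_bddAbove x) ⟨q, hq, rfl⟩
  let φ (x : A) : ℝ := sSup (below x)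
  have hφ : StrictMono φ := fun x y hxy ↦ by
    obtain ⟨q₁, hxq₁, hq₁y⟩ := he x y hxy
    obtain ⟨q₂, hq₁q₂, hq₂y⟩ := he _ y hq₁y
    calc φ x ≤ q₁ := sSup_below_le x q₁ hxq₁.le
      _ < q₂ := by exact_mod_cast e.lt_iff_lt.mp hq₁q₂
      _ ≤ φ y := le_sSup_below y q₂ hq₂y
  refine ⟨StrictMono.orderIsoOfSurjective φ hφ fun r ↦ ?_⟩
  let S : Set A := e '' {q : ℚ | (q : ℝ) < r}
  have hS : S.Nonempty := by
    obtain ⟨q, hq⟩ := exists_rat_lt r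
    exact ⟨e q, q, hq, rfl⟩
  have hS' : BddAbove S := by
    obtain ⟨q, hq⟩ := exists_rat_gt r
    refine ⟨e q, ?_⟩
    rintro - ⟨q', hq', rfl⟩
    exact e.le_iff_le.mpr (by exact_mod_cast (hq'.trans hq).le)
  refine ⟨sSup S, le_antisymm ?_ ?_⟩
  · refine csSup_le (below_nonempty _) ?_
    rintro - ⟨q, hq, rfl⟩
    obtain ⟨-, ⟨q', hq', rfl⟩, hqq'⟩ := exists_lt_of_lt_csSup hS hq
    exact (Rat.cast_lt.mpr (e.lt_iff_lt.mp hqq')).le.trans hq'.le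
  · refine le_of_forall_rat_lt_imp_le fun q hq ↦ ?_
    obtain ⟨q', hqq', hq'r⟩ := exists_rat_btwn hq
    exact le_sSup_below _ q ((e.lt_iff_lt.mpr (by exact_mod_cast hqq')).trans_le
      (le_csSup hS' ⟨q', hq'r, rfl⟩))

theorem not_pseudoMetrizableSpace_of_countable_bddAbove {X : Type*} [TopologicalSpace X]
    [LinearOrder X] [ClosedIciTopology X] [CompactIccSpace X] [NoMaxOrder X] [Nonempty X]
    (h : ∀ s : Set X, s.Countable → BddAbove s) :
    ¬ TopologicalSpace.PseudoMetrizableSpace X := by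
  intro
  obtain ⟨x⟩ := ‹Nonempty X›
  have : IsSeqCompact (Ici x) := fun u hu ↦ by
    obtain ⟨c, hc⟩ := h _ (countable_range u)
    obtain ⟨a, ha, φ, hφ, hlim⟩ := isCompact_Icc.isSeqCompact
      (fun n ↦ (⟨hu n, hc (mem_range_self n)⟩ : u n ∈ Icc x c))
    exact ⟨a, ha.1, φ, hφ, hlim⟩
  exact not_bddAbove_Ici x this.isCompact.bddAbove

theorem Ordinal.countable_Iic_of_lt_omega_one {o : Ordinal} (ho : o < ω₁) :
    (Set.Iic o).Countable := by
  rw [← Order.Iio_succ, ← Cardinal.le_aleph0_iff_set_countable, Cardinal.mk_Iio_ordinal,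
    Cardinal.lift_le_aleph0, ← Cardinal.lt_aleph_one_iff, ← Cardinal.lt_ord, Cardinal.ord_aleph]
  exact (Cardinal.isSuccLimit_omega 1).succ_lt ho

namespace LongRay

def fst (p : LongRay) : Ordinal := (ofLex p.1).1.1

def snd (p : LongRay) : ℝ := (ofLex p.1).2.1

theorem fst_lt_omega_one (p : LongRay) : fst p < ω₁ :=
  Cardinal.ord_aleph 1 ▸ (ofLex p.1).1.2

theorem snd_nonneg (p : LongRay) : 0 ≤ snd p := (ofLex p.1).2.2.1

theorem snd_lt_one (p : LongRay) : snd p < 1 := (ofLex p.1).2.2.2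

theorem fst_pos_or_snd_pos (p : LongRay) : 0 < fst p ∨ 0 < snd p := by
  by_contra! h
  exact p.2 <| congrArg toLex <| Prod.ext (Subtype.ext (nonpos_iff_eq_zero.mp h.1))
    (Subtype.ext (h.2.antisymm (snd_nonneg p)))

theorem ext_iff {p q : LongRay} : p = q ↔ fst p = fst q ∧ snd p = snd q := by
  refine ⟨by rintro rfl; simp, fun ⟨h₁, h₂⟩ ↦ ?_⟩
  exact Subtype.ext <| congrArg toLex <| Prod.ext (Subtype.ext h₁) (Subtype.ext h₂)

def mk (a : Ordinal) (t : ℝ) (ha : a < ω₁) (ht : t ∈ Ico 0 1) (hpos : 0 < a ∨ 0 < t) :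
    LongRay :=
  ⟨toLex (⟨a, Cardinal.ord_aleph 1 ▸ ha⟩, ⟨t, ht⟩), fun h ↦ by
    have : a = 0 ∧ t = 0 :=
      ⟨congrArg (fun p ↦ (ofLex p).1.1) h, congrArg (fun p ↦ (ofLex p).2.1) h⟩
    rcases hpos with hpos | hpos <;> simp [this] at hpos⟩

@[simp] theorem fst_mk {a t ha ht hpos} : fst (mk a t ha ht hpos) = a := rfl

@[simp] theorem snd_mk {a t ha ht hpos} : snd (mk a t ha ht hpos) = t := rfl

theorem lt_iff {p q : LongRay} : p < q ↔ fst p < fst q ∨ fst p = fst q ∧ snd p < snd q := by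
  change toLex (ofLex p.1) < toLex (ofLex q.1) ↔ _
  exact Prod.Lex.lt_iff.trans (or_congr .rfl (and_congr Subtype.ext_iff .rfl))

theorem le_iff {p q : LongRay} : p ≤ q ↔ fst p < fst q ∨ fst p = fst q ∧ snd p ≤ snd q := by
  change toLex (ofLex p.1) ≤ toLex (ofLex q.1) ↔ _
  exact Prod.Lex.le_iff.trans (or_congr .rfl (and_congr Subtype.ext_iff .rfl))

theorem fst_le_fst {p q : LongRay} (h : p ≤ q) : fst p ≤ fst q := by
  rcases le_iff.mp h with h | h
  exacts [h.le, h.1.le]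

def afterLevel (a : Ordinal) (ha : a < ω₁) : LongRay :=
  mk (a + 1) 0 ((Cardinal.isSuccLimit_omega 1).add_one_lt ha) (left_mem_Ico.mpr one_pos)
    (Or.inl (by simp))

theorem lt_afterLevel_iff {a : Ordinal} {ha : a < ω₁} {p : LongRay} :
    p < afterLevel a ha ↔ fst p ≤ a := by
  rw [afterLevel, lt_iff, fst_mk, snd_mk, Order.lt_add_one_iff,
    or_iff_left fun h ↦ (snd_nonneg p).not_gt h.2]

instance : Nonempty LongRay := ⟨afterLevel 0 (omega_pos 1)⟩

instance : NoMaxOrder LongRay :=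
  ⟨fun p ↦ ⟨afterLevel (fst p) (fst_lt_omega_one p), lt_afterLevel_iff.mpr le_rfl⟩⟩

instance : NoMinOrder LongRay := ⟨fun p ↦ by
  rcases fst_pos_or_snd_pos p with h | h
  · exact ⟨mk 0 (1 / 2) (omega_pos 1) ⟨by norm_num, by norm_num⟩ (Or.inr (by norm_num)),
      lt_iff.mpr (Or.inl h)⟩
  · exact ⟨mk (fst p) (snd p / 2) (fst_lt_omega_one p) ⟨by positivity, by linarith [snd_lt_one p]⟩
      (Or.inr (by positivity)), lt_iff.mpr (Or.inr ⟨rfl, half_lt_self h⟩)⟩⟩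

theorem exists_snd_rat_between {p q : LongRay} (h : p < q) :
    ∃ r : LongRay, snd r ∈ range ((↑) : ℚ → ℝ) ∧ p < r ∧ r < q := by
  obtain ⟨t, hpt, ht1, htq⟩ :
      ∃ t : ℚ, snd p < t ∧ (t : ℝ) < 1 ∧ (fst p = fst q → (t : ℝ) < snd q) := by
    rcases lt_iff.mp h with h | ⟨h, h'⟩
    · obtain ⟨t, ht⟩ := exists_rat_btwn (snd_lt_one p)
      exact ⟨t, ht.1, ht.2, fun e ↦ absurd e h.ne⟩
    · obtain ⟨t, ht⟩ := exists_rat_btwn h'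
      exact ⟨t, ht.1, ht.2.trans (snd_lt_one q), fun _ ↦ ht.2⟩
  have ht0 := (snd_nonneg p).trans_lt hpt
  refine ⟨mk (fst p) t (fst_lt_omega_one p) ⟨ht0.le, ht1⟩ (Or.inr ht0), ⟨t, rfl⟩,
    lt_iff.mpr (Or.inr ⟨rfl, hpt⟩), lt_iff.mpr ?_⟩
  exact (lt_iff.mp h).imp id fun h ↦ ⟨h.1, htq h.1⟩

instance : DenselyOrdered LongRay :=
  ⟨fun _ _ h ↦ (exists_snd_rat_between h).imp fun _ ↦ And.right⟩

theorem exists_isLUB {S : Set LongRay} (hne : S.Nonempty) (hbdd : BddAbove S) :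
    ∃ x, IsLUB S x := by
  obtain ⟨u, hu⟩ := hbdd
  set a := sSup (fst '' S)
  have fst_le_a : ∀ p ∈ S, fst p ≤ a := fun p hp ↦
    le_csSup ⟨fst u, by rintro _ ⟨p, hp, rfl⟩; exact fst_le_fst (hu hp)⟩ (mem_image_of_mem _ hp)
  have a_le_fst : ∀ c ∈ upperBounds S, a ≤ fst c := fun c hc ↦
    csSup_le' (by rintro _ ⟨p, hp, rfl⟩; exact fst_le_fst (hc hp))
  have ha : a < ω₁ := (a_le_fst u hu).trans_lt (fst_lt_omega_one u)
  -- `s = 0` (`Real.sSup_empty`) when no point of `S` lies on level `a`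
  set s := sSup (snd '' {p ∈ S | fst p = a})
  have snd_le_s : ∀ p ∈ S, fst p = a → snd p ≤ s := fun p hp hpa ↦
    le_csSup ⟨1, by rintro _ ⟨p, -, rfl⟩; exact (snd_lt_one p).le⟩ ⟨p, ⟨hp, hpa⟩, rfl⟩
  have s_le_snd : ∀ c ∈ upperBounds S, fst c = a → s ≤ snd c := by
    refine fun c hc hca ↦ Real.sSup_le ?_ (snd_nonneg c)
    rintro _ ⟨p, ⟨hp, hpa⟩, rfl⟩
    exact ((le_iff.mp (hc hp)).resolve_left (by rw [hpa, hca]; exact lt_irrefl a)).2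
  have hs1 : s ≤ 1 := Real.sSup_le (by rintro _ ⟨p, -, rfl⟩; exact (snd_lt_one p).le) zero_le_one
  rcases hs1.lt_or_eq with hs_lt | hs_eq
  · have hpos : 0 < a ∨ 0 < s := by
      obtain ⟨p, hp⟩ := hne
      by_contra! h
      have hpa : fst p = a := le_antisymm (fst_le_a p hp) (h.1.trans zero_le)
      have := fst_pos_or_snd_pos p
      rw [hpa] at this
      exact this.elim h.1.not_gt ((snd_le_s p hp hpa).trans h.2).not_gt
    refine ⟨mk a s ha ⟨Real.sSup_nonneg ?_, hs_lt⟩ hpos, fun p hp ↦ le_iff.mpr ?_,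
      fun c hc ↦ le_iff.mpr ?_⟩
    · rintro _ ⟨p, -, rfl⟩; exact snd_nonneg p
    · rcases (fst_le_a p hp).lt_or_eq with h | h
      exacts [Or.inl h, Or.inr ⟨h, snd_le_s p hp h⟩]
    · rcases (a_le_fst c hc).lt_or_eq with h | h
      exacts [Or.inl h, Or.inr ⟨h, s_le_snd c hc h.symm⟩]
  · -- the points of `S` on level `a` accumulate at its right end
    refine ⟨afterLevel a ha, fun p hp ↦ (lt_afterLevel_iff.mpr (fst_le_a p hp)).le,
      fun c hc ↦ not_lt.mp fun h ↦ ?_⟩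
    have := s_le_snd c hc (le_antisymm (lt_afterLevel_iff.mp h) (a_le_fst c hc))
    linarith [snd_lt_one c, hs_eq]

noncomputable instance : ConditionallyCompleteLinearOrder LongRay :=
  .ofExistsIsLUB LongRay fun _ ↦ exists_isLUB

theorem bddAbove_of_countable {S : Set LongRay} (hS : S.Countable) : BddAbove S := by
  have : Countable S := hS.to_subtype
  have hsup : ⨆ p : S, fst p < ω₁ := Ordinal.iSup_lt_omega_one fun p ↦ fst_lt_omega_one p
  refine ⟨afterLevel _ hsup, fun p hp ↦ (lt_afterLevel_iff.mpr ?_).le⟩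
  exact le_ciSup (f := fun p : S ↦ fst p.1) Ordinal.bddAbove_of_small ⟨p, hp⟩

theorem countable_setOf_fst_le_snd_rat {a : Ordinal} (ha : a < ω₁) :
    {p : LongRay | fst p ≤ a ∧ snd p ∈ range ((↑) : ℚ → ℝ)}.Countable := by
  exact MapsTo.countable_of_injOn (f := fun p ↦ (fst p, snd p)) (t := Iic a ×ˢ range _)
    (fun p hp ↦ hp) (fun p _ q _ h ↦ ext_iff.mpr (Prod.ext_iff.mp h))
    ((countable_Iic_of_lt_omega_one ha).prod (countable_range _))

theorem exists_isOpen_homeomorph_real (x : LongRay) :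
    ∃ U : Set LongRay, IsOpen U ∧ x ∈ U ∧ Nonempty (U ≃ₜ ℝ) := by
  set b := afterLevel (fst x) (fst_lt_omega_one x)
  have hx : x ∈ Iio b := lt_afterLevel_iff.mpr le_rfl
  have : Inhabited (Iio b) := ⟨⟨x, hx⟩⟩
  have : NoMaxOrder (Iio b) := ⟨fun p ↦ by
    obtain ⟨q, h₁, h₂⟩ := exists_between (show p.1 < b from p.2)
    exact ⟨⟨q, h₂⟩, h₁⟩⟩
  let D : Set (Iio b) := {p | snd p.1 ∈ range ((↑) : ℚ → ℝ)}
  have hD : D.Countable := by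
    exact ((countable_setOf_fst_le_snd_rat (fst_lt_omega_one x)).preimage
      Subtype.val_injective).mono fun p hp ↦
        show fst p.1 ≤ fst x ∧ _ from ⟨lt_afterLevel_iff.mp p.2, hp⟩
  have hdense (p q : Iio b) (h : p < q) : ∃ d ∈ D, p < d ∧ d < q := by
    obtain ⟨r, hr, hpr, hrq⟩ := exists_snd_rat_between (show p.1 < q.1 from h)
    exact ⟨⟨r, hrq.trans q.2⟩, hr, hpr, hrq⟩
  obtain ⟨e, he⟩ := exists_orderEmbedding_rat_of_countable_dense hD hdense
  obtain ⟨f⟩ := nonempty_orderIso_real_of_dense_rat_embedding e he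
  exact ⟨Iio b, isOpen_Iio, hx, ⟨f.toHomeomorph⟩⟩

end LongRay

theorem longRay_properties :
    ConnectedSpace LongRay ∧ T2Space LongRay ∧
      (∀ x : LongRay, ∃ U : Set LongRay, IsOpen U ∧ x ∈ U ∧ Nonempty (U ≃ₜ ℝ)) ∧
      ¬ TopologicalSpace.MetrizableSpace LongRay :=
  ⟨⟨inferInstance⟩, inferInstance, LongRay.exists_isOpen_homeomorph_real, fun _ ↦
    not_pseudoMetrizableSpace_of_countable_bddAbove (fun _ ↦ LongRay.bddAbove_of_countable)
      inferInstance⟩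
end

section
/- A topological manifold M is metrisable if and only if M embeds in some Euclidean space ℝ^N, i.e., there is a topological embedding of M into ℝ^N for some N. -/
open Set Topology Metric Filter Function

section ZeroDim

variable {X : Type*} [TopologicalSpace X]

/-- Small inductive dimension `0` of `A`, with frontiers taken in the ambient space. -/
def IsZeroDim (A : Set X) : Prop :=
  ∀ x ∈ A, ∀ U : Set X, IsOpen U → x ∈ U →
    ∃ V, IsOpen V ∧ x ∈ V ∧ V ⊆ U ∧ Disjoint (frontier V) A

theorem IsZeroDim.mono {A B : Set X} (hA : IsZeroDim A) (hBA : B ⊆ A) : IsZeroDim B := by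
  intro x hx U hU hxU
  obtain ⟨V, hV, hxV, hVU, hfr⟩ := hA x (hBA hx) U hU hxU
  exact ⟨V, hV, hxV, hVU, hfr.mono_right hBA⟩

theorem IsZeroDim.image_of_isOpenEmbedding {Y : Type*} [TopologicalSpace Y] {f : Y → X}
    (hf : IsOpenEmbedding f) {B : Set Y} (hB : IsZeroDim B) : IsZeroDim (f '' B) := by
  rintro _ ⟨y, hy, rfl⟩ U hU hyU
  obtain ⟨V, hV, hyV, hVU, hfr⟩ := hB y hy (f ⁻¹' U) (hU.preimage hf.continuous) hyU
  refine ⟨f '' V, hf.isOpenMap V hV, mem_image_of_mem f hyV, image_subset_iff.2 hVU, ?_⟩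
  have hpre : f ⁻¹' frontier (f '' V) = frontier V := by
    rw [hf.isOpenMap.preimage_frontier_eq_frontier_preimage hf.continuous,
      preimage_image_eq V hf.injective]
  refine disjoint_left.2 ?_
  rintro _ hb ⟨b, hbB, rfl⟩
  exact disjoint_left.1 hfr (hpre ▸ hb : b ∈ frontier V) hbB

theorem exists_nat_subcover [SecondCountableTopology X] {ι : Type*} [Nonempty ι]
    {s : ι → Set X} (hs : ∀ i, IsOpen (s i)) : ∃ e : ℕ → ι, ⋃ m, s (e m) = ⋃ i, s i := by
  obtain ⟨T, hTc, hT⟩ := TopologicalSpace.isOpen_iUnion_countable s hs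
  rcases T.eq_empty_or_nonempty with rfl | hTne
  · refine ⟨fun _ => Classical.arbitrary ι, (iUnion_subset fun _ => subset_iUnion s _).antisymm ?_⟩
    simp [← hT]
  · obtain ⟨e, rfl⟩ := hTc.exists_eq_range hTne
    exact ⟨e, by rw [← hT, biUnion_range]⟩

theorem exists_pairwise_disjoint_of_disjoint_frontier {Z : Set X} {V : ℕ → Set X}
    (hV : ∀ m, IsOpen (V m)) (hfr : ∀ m, Disjoint (frontier (V m)) Z) (hZ : Z ⊆ ⋃ m, V m) :
    ∃ N : ℕ → Set X, (∀ m, IsOpen (N m)) ∧ (∀ m, N m ⊆ V m) ∧ Pairwise (Disjoint on N) ∧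
      Z ⊆ ⋃ m, N m := by
  classical
  set N : ℕ → Set X := fun m => V m \ ⋃ l ∈ Finset.range m, closure (V l)
  refine ⟨N, fun m => (hV m).sdiff (isClosed_biUnion_finset fun l _ => isClosed_closure),
    fun m => sdiff_subset, (pairwise_disjoint_on N).2 fun k l hkl => ?_, fun z hz => ?_⟩
  · refine disjoint_left.2 fun z hzk hzl => hzl.2 ?_
    exact mem_biUnion (Finset.mem_range.2 hkl) (subset_closure hzk.1)
  · have hex : ∃ m, z ∈ V m := mem_iUnion.1 (hZ hz)
    refine mem_iUnion.2 ⟨Nat.find hex, Nat.find_spec hex, ?_⟩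
    simp only [mem_iUnion, Finset.mem_range, not_exists]
    intro l hl hcl
    have hzl : z ∉ V l := Nat.find_min hex hl
    exact disjoint_left.1 (hfr l) ⟨hcl, by rwa [(hV l).interior_eq]⟩ hz

theorem IsZeroDim.exists_disjoint_shrinking [SecondCountableTopology X] {Z : Set X}
    (hZ : IsZeroDim Z) {ι : Type*} {U : ι → Set X} (hU : ∀ i, IsOpen (U i))
    (hZU : Z ⊆ ⋃ i, U i) :
    ∃ O : ι → Set X, (∀ i, IsOpen (O i)) ∧ (∀ i, O i ⊆ U i) ∧ Pairwise (Disjoint on O) ∧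
      Z ⊆ ⋃ i, O i := by
  rcases isEmpty_or_nonempty ι with hι | hι
  · exact ⟨fun _ => ∅, fun _ => isOpen_empty, fun _ => empty_subset _, fun i => isEmptyElim i,
      by simpa using hZU⟩
  let 𝒱 := {p : Set X × ι // IsOpen p.1 ∧ Disjoint (frontier p.1) Z ∧ p.1 ⊆ U p.2}
  have : Nonempty 𝒱 := ⟨⟨(∅, Classical.arbitrary ι), isOpen_empty, by simp, empty_subset _⟩⟩
  obtain ⟨e, he⟩ := exists_nat_subcover (s := fun p : 𝒱 => p.1.1) fun p => p.2.1
  have hZe : Z ⊆ ⋃ m, (e m).1.1 := by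
    rw [he]
    intro z hz
    obtain ⟨i, hi⟩ := mem_iUnion.1 (hZU hz)
    obtain ⟨V, hV, hzV, hVU, hfr⟩ := hZ z hz (U i) (hU i) hi
    exact mem_iUnion.2 ⟨⟨(V, i), hV, hfr, hVU⟩, hzV⟩
  obtain ⟨N, hN, hNe, hNd, hZN⟩ :=
    exists_pairwise_disjoint_of_disjoint_frontier (fun m => (e m).2.1) (fun m => (e m).2.2.1) hZe
  refine ⟨fun i => ⋃ (m) (_ : (e m).1.2 = i), N m, fun i => isOpen_biUnion fun m _ => hN m,
    fun i => iUnion₂_subset fun m hm => hm ▸ (hNe m).trans (e m).2.2.2, fun i j hij => ?_,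
    fun z hz => ?_⟩
  · simp only [onFun, disjoint_iUnion_left, disjoint_iUnion_right]
    rintro m rfl l hl
    exact hNd fun hml => hij (hml ▸ hl).symm
  · obtain ⟨m, hm⟩ := mem_iUnion.1 (hZN hz)
    exact mem_iUnion.2 ⟨_, mem_iUnion₂.2 ⟨m, rfl, hm⟩⟩

theorem closure_union_inter_subset {A K P O O' : Set X} (hK : IsClosed K) (hO' : IsOpen O')
    (hOO' : Disjoint O O') (hAK : A ∩ K ⊆ O ∪ O') :
    closure (P ∪ A ∩ K ∩ O) ∩ A ⊆ closure P ∪ O := by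
  rintro x ⟨hx, hxA⟩
  rw [closure_union] at hx
  refine hx.imp id fun hx => ?_
  have hxK : x ∈ K := hK.closure_subset (closure_mono
    (inter_subset_left.trans inter_subset_right) hx)
  exact (hAK ⟨hxA, hxK⟩).resolve_right fun hxO' =>
    disjoint_left.1 (hOO'.symm.closure_right hO') hxO' (closure_mono inter_subset_right hx)

end ZeroDim

theorem exists_open_nhds_of_separated {X : Type*} [PseudoMetricSpace X] {S T : Set X}
    (hST : Disjoint S (closure T)) (hTS : Disjoint (closure S) T) :
    ∃ V W, IsOpen V ∧ IsOpen W ∧ Disjoint V W ∧ S ⊆ V ∧ T ⊆ W ∧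
      closure V ∩ closure W ⊆ closure S ∩ closure T := by
  have hcont (A : Set X) : Continuous fun x => 2 * infEDist x A :=
    (ENNReal.continuous_const_mul ENNReal.ofNat_ne_top).comp continuous_infEDist
  have le_two_mul (a : ENNReal) : a ≤ 2 * a := le_mul_of_one_le_left' one_le_two
  -- `infEDist` avoids the junk value `infDist x ∅ = 0`.
  let nhd (A B : Set X) : Set X := {x | 2 * infEDist x A < infEDist x B}
  have subset_nhd {A B : Set X} (h : Disjoint A (closure B)) : A ⊆ nhd A B := fun x hx => by
    show 2 * infEDist x A < infEDist x B
    rw [infEDist_zero_of_mem hx, mul_zero]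
    exact infEDist_pos_iff_notMem_closure.2 (disjoint_left.1 h hx)
  have le_of_mem_closure {A B : Set X} {x : X} (h : x ∈ closure (nhd A B)) :
      2 * infEDist x A ≤ infEDist x B :=
    closure_lt_subset_le (hcont A) continuous_infEDist h
  refine ⟨nhd S T, nhd T S, isOpen_lt (hcont S) continuous_infEDist,
    isOpen_lt (hcont T) continuous_infEDist, disjoint_left.2 fun x hST' hTS' =>
      lt_asymm ((le_two_mul _).trans_lt hST') ((le_two_mul _).trans_lt hTS'),
    subset_nhd hST, subset_nhd hTS.symm, fun x ⟨hS, hT⟩ => ?_⟩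
  rcases S.eq_empty_or_nonempty with rfl | hSne
  · simp [nhd] at hS
  have hS0 : infEDist x S = 0 := by
    have h : infEDist x S + infEDist x S ≤ infEDist x S + 0 := by
      rw [← two_mul, add_zero]
      exact (le_of_mem_closure hS).trans ((le_two_mul _).trans (le_of_mem_closure hT))
    exact nonpos_iff_eq_zero.1 ((ENNReal.add_le_add_iff_left (infEDist_ne_top hSne)).1 h)
  have hT0 : infEDist x T = 0 :=
    le_zero_iff.1 ((le_two_mul _).trans (hS0 ▸ le_of_mem_closure hT))
  exact ⟨mem_closure_iff_infEDist_zero.2 hS0, mem_closure_iff_infEDist_zero.2 hT0⟩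

section SumTheorem

variable {X : Type*} [MetricSpace X] [SecondCountableTopology X]

theorem IsZeroDim.exists_extend_separation {A K V W : Set X} (hK : IsClosed K)
    (hAK : IsZeroDim (A ∩ K)) (hV : IsOpen V) (hW : IsOpen W) (hVW : Disjoint V W)
    (hA : Disjoint (closure V ∩ closure W) A) :
    ∃ V' W', IsOpen V' ∧ IsOpen W' ∧ Disjoint V' W' ∧ Disjoint (closure V' ∩ closure W') A ∧
      V ⊆ V' ∧ W ⊆ W' ∧ A ∩ K ⊆ V' ∪ W' := by
  -- Split `A ∩ K` into a part away from `closure W`, to join `V`, and one away from `closure V`.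
  obtain ⟨O, hO, hOU, hOd, hAKO⟩ := hAK.exists_disjoint_shrinking
    (U := fun b => bif b then (closure W)ᶜ else (closure V)ᶜ)
    (fun b => by cases b <;> exact isClosed_closure.isOpen_compl)
    (fun x hx => by
      by_cases hxW : x ∈ closure W
      · exact mem_iUnion.2 ⟨false, fun hxV => disjoint_left.1 hA ⟨hxV, hxW⟩ hx.1⟩
      · exact mem_iUnion.2 ⟨true, hxW⟩)
  have hO₁W : Disjoint (O true) (closure W) := subset_compl_iff_disjoint_right.1 (hOU true)
  have hO₂V : Disjoint (O false) (closure V) := subset_compl_iff_disjoint_right.1 (hOU false)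
  have hO₁₂ : Disjoint (O true) (O false) := hOd (by decide)
  have hAKO' : A ∩ K ⊆ O true ∪ O false := fun x hx => by
    obtain ⟨b, hb⟩ := mem_iUnion.1 (hAKO hx)
    cases b
    exacts [Or.inr hb, Or.inl hb]
  set S := V ∪ A ∩ K ∩ O true
  set T := W ∪ A ∩ K ∩ O false
  have key : Disjoint (closure S ∩ closure T) A := by
    refine disjoint_left.2 fun x ⟨hxS, hxT⟩ hxA => ?_
    rcases closure_union_inter_subset hK (hO false) hO₁₂ hAKO' ⟨hxS, hxA⟩ with h₁ | h₁ <;>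
      rcases closure_union_inter_subset hK (hO true) hO₁₂.symm (union_comm _ _ ▸ hAKO')
        ⟨hxT, hxA⟩ with h₂ | h₂
    · exact disjoint_left.1 hA ⟨h₁, h₂⟩ hxA
    · exact disjoint_left.1 hO₂V h₂ h₁
    · exact disjoint_left.1 hO₁W h₁ h₂
    · exact disjoint_left.1 hO₁₂ h₁ h₂
  have separated {P Q O O' : Set X} (hP : IsOpen P) (hPQ : Disjoint P Q)
      (hO'P : Disjoint O' (closure P))
      (hkey : Disjoint (closure (P ∪ A ∩ K ∩ O) ∩ closure (Q ∪ A ∩ K ∩ O')) A) :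
      Disjoint (P ∪ A ∩ K ∩ O) (closure (Q ∪ A ∩ K ∩ O')) := by
    refine disjoint_union_left.2 ⟨Disjoint.closure_right ?_ hP, disjoint_left.2 fun x hx hxc =>
      disjoint_left.1 hkey ⟨subset_closure (Or.inr hx), hxc⟩ hx.1.1⟩
    exact disjoint_union_right.2
      ⟨hPQ, (hO'P.mono_right subset_closure).symm.mono_right inter_subset_right⟩
  obtain ⟨V', W', hV', hW', hVW', hSV', hTW', hcl⟩ := exists_open_nhds_of_separated
    (separated hV hVW hO₂V key) (separated hW hVW.symm hO₁W (by rwa [inter_comm])).symm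
  refine ⟨V', W', hV', hW', hVW', key.mono_left hcl, subset_union_left.trans hSV',
    subset_union_left.trans hTW', fun x hx => ?_⟩
  rcases hAKO' hx with h | h
  · exact Or.inl (hSV' (Or.inr ⟨hx, h⟩))
  · exact Or.inr (hTW' (Or.inr ⟨hx, h⟩))

theorem IsZeroDim.exists_extend_separation_iUnion {A V W : Set X} {K : ℕ → Set X}
    (hK : ∀ m, IsClosed (K m)) (hAK : A ⊆ ⋃ m, K m) (h : ∀ m, IsZeroDim (A ∩ K m))
    (hV : IsOpen V) (hW : IsOpen W) (hVW : Disjoint V W)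
    (hA : Disjoint (closure V ∩ closure W) A) :
    ∃ V' W', IsOpen V' ∧ IsOpen W' ∧ Disjoint V' W' ∧ V ⊆ V' ∧ W ⊆ W' ∧ A ⊆ V' ∪ W' := by
  let Pair := {p : Set X × Set X //
    IsOpen p.1 ∧ IsOpen p.2 ∧ Disjoint p.1 p.2 ∧ Disjoint (closure p.1 ∩ closure p.2) A}
  have step (m : ℕ) (p : Pair) : ∃ q : Pair,
      p.1.1 ⊆ q.1.1 ∧ p.1.2 ⊆ q.1.2 ∧ A ∩ K m ⊆ q.1.1 ∪ q.1.2 := by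
    obtain ⟨⟨V, W⟩, hV, hW, hVW, hA⟩ := p
    obtain ⟨V', W', hV', hW', hVW', hA', hVV', hWW', hcov⟩ :=
      (h m).exists_extend_separation (hK m) hV hW hVW hA
    exact ⟨⟨(V', W'), hV', hW', hVW', hA'⟩, hVV', hWW', hcov⟩
  choose next hnext₁ hnext₂ hnext₃ using step
  let seq : ℕ → Pair := fun m => Nat.rec ⟨(V, W), hV, hW, hVW, hA⟩ (fun m p => next m p) m
  have mono₁ : Monotone fun m => (seq m).1.1 := monotone_nat_of_le_succ fun m => hnext₁ m (seq m)
  have mono₂ : Monotone fun m => (seq m).1.2 := monotone_nat_of_le_succ fun m => hnext₂ m (seq m)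
  refine ⟨⋃ m, (seq m).1.1, ⋃ m, (seq m).1.2, isOpen_iUnion fun m => (seq m).2.1,
    isOpen_iUnion fun m => (seq m).2.2.1, ?_, subset_iUnion (fun m => (seq m).1.1) 0,
    subset_iUnion (fun m => (seq m).1.2) 0, fun x hx => ?_⟩
  · simp only [disjoint_iUnion_left, disjoint_iUnion_right]
    exact fun k l => (seq (k + l)).2.2.2.1.mono (mono₁ (by omega)) (mono₂ (by omega))
  · obtain ⟨m, hm⟩ := mem_iUnion.1 (hAK hx)
    exact (hnext₃ m (seq m) ⟨hx, hm⟩).imp (fun h => mem_iUnion.2 ⟨m + 1, h⟩)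
      fun h => mem_iUnion.2 ⟨m + 1, h⟩

theorem IsZeroDim.of_isClosed_cover {ι : Type*} [Countable ι] {A : Set X} {K : ι → Set X}
    (hK : ∀ i, IsClosed (K i)) (hAK : A ⊆ ⋃ i, K i) (h : ∀ i, IsZeroDim (A ∩ K i)) :
    IsZeroDim A := by
  intro x hx U hU hxU
  rcases isEmpty_or_nonempty ι with hι | hι
  · simpa using hAK hx
  obtain ⟨g, hg⟩ := exists_surjective_nat ι
  obtain ⟨V₀, W₀, hV₀, hW₀, hVW₀, hxV₀, hUW₀, hcl₀⟩ := exists_open_nhds_of_separated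
    (S := {x}) (T := Uᶜ)
    (by rwa [hU.isClosed_compl.closure_eq, disjoint_singleton_left, notMem_compl_iff])
    (by rwa [closure_singleton, disjoint_singleton_left, notMem_compl_iff])
  have hA₀ : Disjoint (closure V₀ ∩ closure W₀) A := by
    rw [closure_singleton, hU.isClosed_compl.closure_eq,
      singleton_inter_eq_empty.2 (notMem_compl_iff.2 hxU), subset_empty_iff] at hcl₀
    exact hcl₀ ▸ empty_disjoint A
  obtain ⟨V, W, hV, hW, hVW, hVV, hWW, hAVW⟩ := IsZeroDim.exists_extend_separation_iUnion
    (K := K ∘ g) (fun m => hK (g m)) (by rwa [comp_def, hg.iUnion_comp K]) (fun m => h (g m))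
    hV₀ hW₀ hVW₀ hA₀
  refine ⟨V, hV, hVV (singleton_subset_iff.1 hxV₀), fun y hyV => ?_,
    disjoint_left.2 fun y hyfr hyA => ?_⟩
  · by_contra hyU
    exact disjoint_left.1 hVW hyV (hWW (hUW₀ hyU))
  · rcases hAVW hyA with h | h
    · exact (hV.frontier_eq ▸ hyfr).2 h
    · exact disjoint_left.1 (hVW.symm.closure_right hW) h hyfr.1

end SumTheorem

section RationalCoordinates

variable {ι : Type*} [Fintype ι]

theorem isZeroDim_pi {D : ι → Set ℝ} (hD : ∀ t, Dense (D t)ᶜ) : IsZeroDim (univ.pi D) := by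
  intro x _ U hU hxU
  obtain ⟨ε, hε, hball⟩ := Metric.isOpen_iff.1 hU x hxU
  have ends (t : ι) : ∃ ab : ℝ × ℝ, ab.1 ∈ (D t)ᶜ ∩ Ioo (x t - ε) (x t) ∧
      ab.2 ∈ (D t)ᶜ ∩ Ioo (x t) (x t + ε) := by
    obtain ⟨a, ha⟩ := (hD t).exists_between (sub_lt_self (x t) hε)
    obtain ⟨b, hb⟩ := (hD t).exists_between (lt_add_of_pos_right (x t) hε)
    exact ⟨(a, b), ha, hb⟩
  choose ab hab using ends
  set V := univ.pi fun t => Ioo (ab t).1 (ab t).2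
  have hV : IsOpen V := isOpen_set_pi finite_univ fun t _ => isOpen_Ioo
  refine ⟨V, hV, fun t _ => ⟨(hab t).1.2.2, (hab t).2.2.1⟩, ?_, ?_⟩
  · refine Subset.trans ?_ hball
    rw [ball_pi x hε]
    refine pi_mono fun t _ => ?_
    rw [Real.ball_eq_Ioo]
    exact Ioo_subset_Ioo (hab t).1.2.1.le (hab t).2.2.2.le
  · refine disjoint_left.2 fun y hy hyD => ?_
    rw [hV.frontier_eq, closure_pi_set] at hy
    obtain ⟨hcl, hyV⟩ := hy
    simp only [V, Set.mem_pi, mem_univ, true_implies, not_forall] at hyV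
    obtain ⟨t, hyt⟩ := hyV
    have hyt' : y t ∈ closure (Ioo (ab t).1 (ab t).2) := hcl t (mem_univ t)
    rw [closure_Ioo ((hab t).1.2.2.trans (hab t).2.2.1).ne] at hyt'
    rcases eq_endpoints_or_mem_Ioo_of_mem_Icc hyt' with h | h | h
    · exact (hab t).1.1 (h ▸ hyD t (mem_univ t))
    · exact (hab t).2.1 (h ▸ hyD t (mem_univ t))
    · exact hyt h

def ratCoords (y : ι → ℝ) : Set ι := {t | y t ∈ range ((↑) : ℚ → ℝ)}

theorem isZeroDim_setOf_ncard_ratCoords_eq (j : ℕ) :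
    IsZeroDim {y : ι → ℝ | (ratCoords y).ncard = j} := by
  classical
  refine IsZeroDim.of_isClosed_cover (ι := {S : Set ι // S.ncard = j} × (ι → ℚ))
    (K := fun Sq => {y | ∀ t ∈ Sq.1.1, y t = Sq.2 t}) (fun Sq => ?_) (fun y hy => ?_)
    (fun ⟨⟨S, hS⟩, q⟩ => ?_)
  · simp only [ofPred_forall]
    exact isClosed_iInter fun t => isClosed_iInter fun _ =>
      isClosed_eq (continuous_apply t) continuous_const
  · have (t : ι) : ∃ r : ℚ, t ∈ ratCoords y → (r : ℝ) = y t := by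
      by_cases ht : t ∈ ratCoords y
      · obtain ⟨r, hr⟩ := ht
        exact ⟨r, fun _ => hr⟩
      · exact ⟨0, fun h => absurd h ht⟩
    choose q hq using this
    exact mem_iUnion.2 ⟨(⟨ratCoords y, hy⟩, q), fun t ht => (hq t ht).symm⟩
  · refine IsZeroDim.mono (isZeroDim_pi
      (D := fun t => if t ∈ S then {(q t : ℝ)} else (range ((↑) : ℚ → ℝ))ᶜ) fun t => ?_) ?_
    · split_ifs
      · exact dense_compl_singleton _
      · rw [compl_compl]
        exact Rat.denseRange_cast
    · rintro y ⟨hy, hyq⟩ t -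
      have hSy : S = ratCoords y := eq_of_subset_of_ncard_le
        (fun t ht => ⟨q t, (hyq t ht).symm⟩) (hy.trans hS.symm).le (toFinite _)
      dsimp only
      split_ifs with ht
      · exact hyq t ht
      · rwa [hSy] at ht

end RationalCoordinates

section Decomposition

variable {M : Type*} [MetricSpace M] [SecondCountableTopology M] {n : ℕ}

theorem exists_isZeroDim_cover_of_charts {e : ℕ → (Fin n → ℝ) → M}
    (he : ∀ i, IsOpenEmbedding (e i)) (hcov : ⋃ i, range (e i) = univ) :
    ∃ Z : Fin (n + 1) → Set M, (∀ j, IsZeroDim (Z j)) ∧ ⋃ j, Z j = univ := by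
  set B := disjointed fun i => range (e i)
  refine ⟨fun j => ⋃ i, B i ∩ e i '' {y | (ratCoords y).ncard = j}, fun j => ?_, ?_⟩
  · have closed_pieces (i : ℕ) : ∃ K : ℕ → Set M, (∀ k, IsClosed (K k)) ∧ ⋃ k, K k = B i := by
      obtain ⟨F, hF, -, hFU, -⟩ := (he i).isOpen_range.exists_iUnion_isClosed
      refine ⟨fun k => F k ∩ ⋂ l < i, (range (e l))ᶜ, fun k => (hF k).inter
        (isClosed_biInter fun l _ => (he l).isOpen_range.isClosed_compl), ?_⟩
      rw [← iUnion_inter, hFU]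
      exact (disjointed_eq_inter_compl (fun l => range (e l)) i).symm
    choose K hK hKB using closed_pieces
    refine IsZeroDim.of_isClosed_cover (K := fun p : ℕ × ℕ => K p.1 p.2) (fun p => hK _ _)
      (fun x hx => ?_) fun ⟨i, k⟩ => ?_
    · obtain ⟨i, hxB, -⟩ := mem_iUnion.1 hx
      rw [← hKB i] at hxB
      obtain ⟨k, hk⟩ := mem_iUnion.1 hxB
      exact mem_iUnion.2 ⟨(i, k), hk⟩
    · refine ((isZeroDim_setOf_ncard_ratCoords_eq j).image_of_isOpenEmbedding (he i)).mono ?_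
      rintro x ⟨hx, hxK⟩
      obtain ⟨i', hxB', hxH⟩ := mem_iUnion.1 hx
      have hxB : x ∈ B i := hKB i ▸ mem_iUnion.2 ⟨k, hxK⟩
      obtain rfl : i' = i := by
        by_contra h
        exact disjoint_left.1 (disjoint_disjointed _ h) hxB' hxB
      exact hxH
  · refine eq_univ_of_forall fun x => ?_
    have hx : x ∈ ⋃ i, B i := by rw [iUnion_disjointed, hcov]; trivial
    obtain ⟨i, hxB⟩ := mem_iUnion.1 hx
    obtain ⟨y, rfl⟩ := disjointed_subset _ i hxB
    have hj : (ratCoords y).ncard < n + 1 :=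
      Nat.lt_succ_of_le ((ncard_le_card _).trans (Nat.card_fin n).le)
    exact mem_iUnion.2 ⟨⟨_, hj⟩, mem_iUnion.2 ⟨i, hxB, y, rfl, rfl⟩⟩

end Decomposition

section BallInjection

variable {X : Type*} [TopologicalSpace X] {E : Type*} [NormedAddCommGroup E]

def HasBallInjection (E : Type*) [NormedAddCommGroup E] (V : Set X) : Prop :=
  ∃ f : X → E, ContinuousOn f V ∧ InjOn f V ∧ ∀ x, ‖f x‖ ≤ 1

theorem HasBallInjection.mono {V W : Set X} (h : HasBallInjection E V) (hWV : W ⊆ V) :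
    HasBallInjection E W :=
  let ⟨f, hf, hfi, hfb⟩ := h
  ⟨f, hf.mono hWV, hfi.mono hWV, hfb⟩

theorem hasBallInjection_range [NormedSpace ℝ E] {e : E → X} (he : IsOpenEmbedding e) :
    HasBallInjection E (range e) := by
  set ψ := (he.toOpenPartialHomeomorph e).symm
  have hψ : ψ.source = range e := he.toOpenPartialHomeomorph_target e
  refine ⟨fun x => Homeomorph.unitBall (ψ x), ?_, fun x hx y hy hxy => ?_,
    fun x => (mem_ball_zero_iff.1 (Homeomorph.unitBall (ψ x)).2).le⟩
  · exact continuous_subtype_val.comp_continuousOn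
      (Homeomorph.unitBall.continuous.comp_continuousOn (hψ ▸ ψ.continuousOn))
  · exact ψ.injOn (hψ ▸ hx) (hψ ▸ hy) (Homeomorph.unitBall.injective (Subtype.ext hxy))

theorem hasBallInjection_iUnion {O : ℕ → Set X} (hO : ∀ i, IsOpen (O i))
    (hd : Pairwise (Disjoint on O)) (h : ∀ i, HasBallInjection E (O i)) :
    HasBallInjection (E × ℝ) (⋃ i, O i) := by
  classical
  choose g hg hgi hgb using h
  let idx : X → ℕ := fun x => if hx : ∃ i, x ∈ O i then hx.choose else 0
  have idx_eq {x : X} {i : ℕ} (hx : x ∈ O i) : idx x = i := by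
    have hex : ∃ i, x ∈ O i := ⟨i, hx⟩
    simp only [idx, dif_pos hex]
    by_contra hne
    exact disjoint_left.1 (hd hne) hex.choose_spec hx
  refine ⟨fun x => (g (idx x) x, ((idx x : ℝ) + 1)⁻¹), fun x hx => ?_,
    fun x hx y hy hxy => ?_, fun x => ?_⟩
  · obtain ⟨i, hxi⟩ := mem_iUnion.1 hx
    have hloc : (fun y => (g i y, ((i : ℝ) + 1)⁻¹)) =ᶠ[𝓝 x]
        fun y => (g (idx y) y, ((idx y : ℝ) + 1)⁻¹) :=
      eventually_of_mem ((hO i).mem_nhds hxi) fun y hy => by simp only [idx_eq hy]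
    exact (((hg i).continuousAt ((hO i).mem_nhds hxi)).prodMk continuousAt_const).congr
      hloc |>.continuousWithinAt
  · obtain ⟨i, hxi⟩ := mem_iUnion.1 hx
    obtain ⟨l, hyl⟩ := mem_iUnion.1 hy
    simp only [Prod.mk.injEq, idx_eq hxi, idx_eq hyl, inv_inj, add_left_inj, Nat.cast_inj] at hxy
    obtain ⟨hgxy, rfl⟩ := hxy
    exact hgi i hxi hyl hgxy
  · rw [Prod.norm_def]
    refine max_le (hgb _ x) ?_
    rw [norm_inv, Real.norm_of_nonneg (by positivity)]
    exact inv_le_one_of_one_le₀ (le_add_of_nonneg_left (Nat.cast_nonneg _))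

theorem exists_open_cover_hasBallInjection [SecondCountableTopology X] {ι : Type*}
    {Z : ι → Set X} (hZ : ∀ j, IsZeroDim (Z j)) (hZcov : ⋃ j, Z j = univ) {U : ℕ → Set X}
    (hU : ∀ i, IsOpen (U i)) (hUcov : ⋃ i, U i = univ) (hUinj : ∀ i, HasBallInjection E (U i)) :
    ∃ V : ι → Set X, (∀ j, IsOpen (V j)) ∧ ⋃ j, V j = univ ∧
      ∀ j, HasBallInjection (E × ℝ) (V j) := by
  choose O hO hOU hOd hZO using fun j => (hZ j).exists_disjoint_shrinking hU (hUcov ▸ subset_univ _)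
  exact ⟨fun j => ⋃ i, O j i, fun j => isOpen_iUnion (hO j),
    eq_univ_of_univ_subset (hZcov ▸ iUnion_mono hZO),
    fun j => hasBallInjection_iUnion (hO j) (hOd j) fun i => (hUinj i).mono (hOU j i)⟩

end BallInjection

section ClosedEmbedding

theorem IsOpen.exists_continuous_support_eq {X : Type*} [PseudoEMetricSpace X] {V : Set X}
    (hV : IsOpen V) : ∃ ρ : X → ℝ, Continuous ρ ∧ support ρ = V := by
  refine ⟨fun x => (min (infEDist x Vᶜ) 1).toReal, ENNReal.continuousOn_toReal.comp_continuous
    (continuous_infEDist.min continuous_const) fun x => ((min_le_right _ _).trans_lt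
      ENNReal.one_lt_top).ne, ?_⟩
  ext x
  simp [ENNReal.toReal_eq_zero_iff, ← mem_closure_iff_infEDist_zero, hV.isClosed_compl.closure_eq]

theorem continuous_smul_of_support_subset {X : Type*} [TopologicalSpace X] {E : Type*}
    [NormedAddCommGroup E] [NormedSpace ℝ E] {V : Set X} (hV : IsOpen V) {ρ : X → ℝ}
    (hρ : Continuous ρ) (hρV : support ρ ⊆ V) {f : X → E} (hf : ContinuousOn f V) {C : ℝ}
    (hfC : ∀ x, ‖f x‖ ≤ C) : Continuous fun x => ρ x • f x := by
  refine continuous_iff_continuousAt.2 fun x => ?_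
  by_cases hx : x ∈ V
  · exact hρ.continuousAt.smul (hf.continuousAt (hV.mem_nhds hx))
  · have hρx : ρ x = 0 := notMem_support.1 fun h => hx (hρV h)
    have h := (hρx ▸ hρ.tendsto x).zero_smul_isBoundedUnder_le
      (isBoundedUnder_of ⟨C, fun y => hfC y⟩ : IsBoundedUnder (· ≤ ·) (𝓝 x) (norm ∘ f))
    rwa [ContinuousAt, hρx, zero_smul]

theorem exists_isProperMap_real (X : Type*) [TopologicalSpace X] [T2Space X]
    [LocallyCompactSpace X] [SigmaCompactSpace X] : ∃ φ : X → ℝ, IsProperMap φ := by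
  let K := CompactExhaustion.choice X
  choose f hf0 hf1 hf01 using fun m => exists_continuous_zero_one_of_isCompact (K.isCompact m)
    isOpen_interior.isClosed_compl (disjoint_compl_right_iff_subset.2 (K.subset_interior_succ m))
  have vanish {x : X} {N m : ℕ} (hx : x ∈ K N) (hm : N ≤ m) : f m x = 0 := hf0 m (K.subset hm hx)
  have local_sum {x : X} {N : ℕ} (hx : x ∈ K N) : ∑' m, f m x = ∑ m ∈ Finset.range N, f m x :=
    tsum_eq_sum fun m hm => vanish hx (by simpa using hm)
  have hφ : Continuous fun x => ∑' m, f m x := continuous_iff_continuousAt.2 fun x => by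
    have hnhds : interior (K (K.find x + 1)) ∈ 𝓝 x :=
      isOpen_interior.mem_nhds (K.subset_interior_succ _ (K.mem_find x))
    exact (continuous_finsetSum _ fun m _ => (f m).continuous).continuousAt.congr
      (eventually_of_mem hnhds fun y hy => (local_sum (interior_subset hy)).symm)
  have sublevel (N : ℕ) : (fun x => ∑' m, f m x) ⁻¹' Iic (N : ℝ) ⊆ K (N + 1) := by
    intro x hx
    by_contra hxK
    have ones : ∀ m ∈ Finset.range (N + 1), f m x = 1 := fun m hm =>
      hf1 m fun hint => hxK (K.subset (by simpa using hm) (interior_subset hint))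
    have hsum : ∑ m ∈ Finset.range (N + 1), f m x ≤ ∑' m, f m x :=
      (summable_of_ne_finset_zero (s := Finset.range (K.find x)) fun m hm => vanish (K.mem_find x)
        (by simpa using hm)).sum_le_tsum _ fun m _ => (hf01 m x).1
    rw [Finset.sum_congr rfl ones] at hsum
    simp only [Finset.sum_const, Finset.card_range, nsmul_eq_mul, mul_one, Nat.cast_add,
      Nat.cast_one] at hsum
    linarith [show ∑' m, f m x ≤ N from hx]
  refine ⟨_, isProperMap_iff_isCompact_preimage.2 ⟨hφ, fun L hL => ?_⟩⟩
  obtain ⟨R, hR⟩ := hL.bddAbove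
  obtain ⟨N, hN⟩ := exists_nat_ge R
  exact (K.isCompact (N + 1)).of_isClosed_subset (hL.isClosed.preimage hφ)
    ((preimage_mono fun y hy => (hR hy).trans hN).trans (sublevel N))

theorem exists_isClosedEmbedding_of_hasBallInjection {X : Type*} [PseudoEMetricSpace X]
    {E : Type*} [NormedAddCommGroup E] [NormedSpace ℝ E] {ι : Type*} {φ : X → ℝ}
    (hφ : IsProperMap φ) {V : ι → Set X} (hV : ∀ i, IsOpen (V i)) (hcov : ⋃ i, V i = univ)
    (hinj : ∀ i, HasBallInjection E (V i)) : ∃ F : X → (ι → E × ℝ) × ℝ, IsClosedEmbedding F := by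
  choose f hf hfi hfb using hinj
  choose ρ hρ hρV using fun i => (hV i).exists_continuous_support_eq
  let F : X → (ι → E × ℝ) × ℝ := fun x => (fun i => (ρ i x • f i x, ρ i x), φ x)
  have hFc : Continuous F := (continuous_pi fun i => (continuous_smul_of_support_subset (hV i)
    (hρ i) (hρV i).subset (hf i) (hfb i)).prodMk (hρ i)).prodMk hφ.continuous
  have hFi : Injective F := by
    intro x y hxy
    simp only [F, Prod.mk.injEq, funext_iff] at hxy
    obtain ⟨i, hxi⟩ := mem_iUnion.1 (hcov.symm ▸ mem_univ x)
    obtain ⟨hsmul, hρxy⟩ := hxy.1 i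
    have hρx : ρ i x ≠ 0 := by rwa [← mem_support, hρV i]
    have hyi : y ∈ V i := by rwa [← hρV i, mem_support, ← hρxy]
    rw [hρxy] at hsmul
    exact hfi i hxi hyi (smul_right_injective E (hρxy ▸ hρx) hsmul)
  exact ⟨F, .of_continuous_injective_isClosedMap hFc hFi
    (isProperMap_of_comp_of_t2 hFc continuous_snd hφ).isClosedMap⟩

end ClosedEmbedding

section ManifoldTopology

theorem weaklyLocallyCompactSpace_of_isOpenEmbedding {X Y : Type*} [TopologicalSpace X]
    [TopologicalSpace Y] [WeaklyLocallyCompactSpace Y]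
    (h : ∀ x : X, ∃ e : Y → X, IsOpenEmbedding e ∧ x ∈ range e) : WeaklyLocallyCompactSpace X := by
  refine ⟨fun x => ?_⟩
  obtain ⟨e, he, y, rfl⟩ := h x
  obtain ⟨K, hK, hKy⟩ := exists_compact_mem_nhds y
  exact ⟨e '' K, hK.image he.continuous, he.isOpenMap.image_mem_nhds hKy⟩

theorem sigmaCompactSpace_of_connected (X : Type*) [TopologicalSpace X] [R1Space X]
    [WeaklyLocallyCompactSpace X] [ParacompactSpace X] [ConnectedSpace X] :
    SigmaCompactSpace X := by
  choose U hUo hxU hUc using exists_isOpen_mem_isCompact_closure (X := X)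
  obtain ⟨t, hto, htU, htlf, hts⟩ :=
    precise_refinement U hUo (eq_univ_of_forall fun x => mem_iUnion.2 ⟨x, hxU x⟩)
  have htc (b : X) : IsCompact (closure (t b)) :=
    (hUc b).of_isClosed_subset isClosed_closure (closure_mono (hts b))
  obtain ⟨x₀⟩ := ConnectedSpace.toNonempty (α := X)
  let C : ℕ → Set X := fun m =>
    Nat.rec {x₀} (fun _ Cm => ⋃ b ∈ {b | (t b ∩ Cm).Nonempty}, closure (t b)) m
  have hC (m : ℕ) : IsCompact (C m) := by
    induction m with
    | zero => exact isCompact_singleton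
    | succ m ih => exact (htlf.finite_nonempty_inter_compact ih).isCompact_biUnion fun b _ => htc b
  have grow {m : ℕ} {b : X} (hb : (t b ∩ C m).Nonempty) : closure (t b) ⊆ C (m + 1) :=
    subset_biUnion_of_mem (u := fun b => closure (t b)) hb
  have mem_t (x : X) : ∃ b, x ∈ t b := mem_iUnion.1 (htU ▸ mem_univ x)
  have hopen : IsOpen (⋃ m, C m) := isOpen_iff_mem_nhds.2 fun x hx => by
    obtain ⟨m, hxm⟩ := mem_iUnion.1 hx
    obtain ⟨b, hxb⟩ := mem_t x
    exact mem_of_superset ((hto b).mem_nhds hxb) (subset_closure.trans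
      ((grow ⟨x, hxb, hxm⟩).trans (subset_iUnion C (m + 1))))
  have hclosed : IsClosed (⋃ m, C m) := closure_subset_iff_isClosed.1 fun x hx => by
    obtain ⟨b, hxb⟩ := mem_t x
    obtain ⟨w, hwb, hw⟩ := mem_closure_iff.1 hx (t b) (hto b) hxb
    obtain ⟨m, hwm⟩ := mem_iUnion.1 hw
    exact mem_iUnion.2 ⟨m + 1, grow ⟨w, hwb, hwm⟩ (subset_closure hxb)⟩
  exact ⟨⟨C, hC, IsClopen.eq_univ ⟨hclosed, hopen⟩ ⟨x₀, mem_iUnion.2 ⟨0, rfl⟩⟩⟩⟩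

theorem exists_nat_isOpenEmbedding_cover {X Y : Type*} [TopologicalSpace X]
    [TopologicalSpace Y] [SecondCountableTopology X] [Nonempty X]
    (charts : ∀ x : X, ∃ e : Y → X, IsOpenEmbedding e ∧ x ∈ range e) :
    ∃ e : ℕ → Y → X, (∀ i, IsOpenEmbedding (e i)) ∧ ⋃ i, range (e i) = univ := by
  obtain ⟨x₀⟩ := ‹Nonempty X›
  obtain ⟨e₀, he₀, -⟩ := charts x₀
  have : Nonempty {e : Y → X // IsOpenEmbedding e} := ⟨⟨e₀, he₀⟩⟩
  obtain ⟨c, hc⟩ := exists_nat_subcover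
    (s := fun e : {e : Y → X // IsOpenEmbedding e} => range e.1) fun e => e.2.isOpen_range
  refine ⟨fun i => (c i).1, fun i => (c i).2, hc.trans <| eq_univ_of_forall fun x => ?_⟩
  obtain ⟨e, he, hx⟩ := charts x
  exact mem_iUnion.2 ⟨⟨e, he⟩, hx⟩

end ManifoldTopology

theorem exists_isEmbedding_of_charts {M : Type*} [MetricSpace M] [ConnectedSpace M] {n : ℕ}
    (charts : ∀ x : M, ∃ e : (Fin n → ℝ) → M, IsOpenEmbedding e ∧ x ∈ range e) :
    ∃ (N : ℕ) (f : M → (Fin N → ℝ)), IsEmbedding f := by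
  have := weaklyLocallyCompactSpace_of_isOpenEmbedding charts
  have := sigmaCompactSpace_of_connected M
  obtain ⟨e, he, hcov⟩ := exists_nat_isOpenEmbedding_cover charts
  obtain ⟨Z, hZ, hZcov⟩ := exists_isZeroDim_cover_of_charts he hcov
  obtain ⟨V, hV, hVcov, hVinj⟩ := exists_open_cover_hasBallInjection hZ hZcov
    (fun i => (he i).isOpen_range) hcov fun i => hasBallInjection_range (he i)
  obtain ⟨φ, hφ⟩ := exists_isProperMap_real M
  obtain ⟨F, hF⟩ := exists_isClosedEmbedding_of_hasBallInjection hφ hV hVcov hVinj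
  let L := ContinuousLinearEquiv.ofFinrankEq (𝕜 := ℝ)
    (E := (Fin (n + 1) → ((Fin n → ℝ) × ℝ) × ℝ) × ℝ) (Module.finrank_fin_fun ℝ).symm
  exact ⟨_, L ∘ F, L.toHomeomorph.isEmbedding.comp hF.isEmbedding⟩

theorem manifold_metrizable_iff_embeds_euclidean (M : Type*) [TopologicalSpace M] (n : ℕ)
    (hM : IsTopManifold M n) :
    TopologicalSpace.MetrizableSpace M ↔
      ∃ (N : ℕ) (f : M → (Fin N → ℝ)), Topology.IsEmbedding f := by
  obtain ⟨hconn, -, hch⟩ := hM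
  refine ⟨fun _ => ?_, fun ⟨N, f, hf⟩ => hf.metrizableSpace⟩
  let := TopologicalSpace.metrizableSpaceMetric M
  refine exists_isEmbedding_of_charts (n := n) fun x => ?_
  obtain ⟨U, hU, hxU, ⟨ψ⟩⟩ := hch x
  exact ⟨(↑) ∘ ψ.symm, hU.isOpenEmbedding_subtypeVal.comp ψ.symm.isOpenEmbedding,
    ψ ⟨x, hxU⟩, by simp⟩
end
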